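/- Every vertex of a finite simple graph G (with minimum degree ≥ 1) has leverage centrality 0 if and only if every edge of G joins two vertices of equal degree. -/

import Mathlib

open SimpleGraph Finset

/-- Degree of a vertex (classical decidability so arbitrary graphs work). -/
noncomputable def deg {V : Type*} [Fintype V] (G : SimpleGraph V) (v : V) : ℕ :=
  letI : DecidableRel G.Adj := Classical.decRel _
  G.degree v

/-- Neighbor finset of a vertex. -/
noncomputable def nbrs {V : Type*} [Fintype V] (G : SimpleGraph V) (v : V) : Finset V :=
  letI : DecidableRel G.Adj := Classical.decRel _
  G.neighborFinset v

/-- Leverage centrality of a vertex. -/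
noncomputable def lev {V : Type*} [Fintype V] (G : SimpleGraph V) (v : V) : ℚ :=
  (1 / (deg G v : ℚ)) *
    ∑ u ∈ nbrs G v, ((deg G v : ℚ) - (deg G u : ℚ)) / ((deg G v : ℚ) + (deg G u : ℚ))

/-!
If some edge joins vertices of different degrees, take
such an unbalanced vertex `v` of maximal degree. None of its neighbours can have larger degree
(that neighbour would be unbalanced too), so every summand `(deg v - deg u) / (deg v + deg u)` of
`lev v` is nonnegative; as `lev v = 0` they all vanish, i.e. all neighbours have degree `deg v`.
-/

theorem natCast_sub_div_natCast_add_eq_zero_iff (a b : ℕ) :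
    ((a : ℚ) - b) / (a + b) = 0 ↔ a = b := by
  rw [div_eq_zero_iff, sub_eq_zero, Nat.cast_inj]
  constructor
  · rintro (h | h)
    · exact h
    · have : a + b = 0 := by exact_mod_cast h
      omega
  · exact Or.inl

section

variable {V : Type*} [Fintype V] (G : SimpleGraph V)

theorem mem_nbrs {u v : V} : u ∈ nbrs G v ↔ G.Adj v u := by
  classical
  simp [nbrs]

theorem card_nbrs (v : V) : #(nbrs G v) = deg G v := by
  classical
  simp [nbrs, deg]

theorem lev_eq_zero_iff (v : V) :
    lev G v = 0 ↔
      ∑ u ∈ nbrs G v, ((deg G v : ℚ) - deg G u) / (deg G v + deg G u) = 0 := by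
  rw [lev, mul_eq_zero, one_div, inv_eq_zero, or_iff_right_iff_imp]
  -- `1 / deg v` is a junk `0` only at an isolated vertex, whose sum is empty anyway
  intro hv
  rw [card_eq_zero.1 ((card_nbrs G v).trans (by exact_mod_cast hv)), sum_empty]

theorem lev_eq_zero_iff_of_forall_adj_deg_le {v : V} (hle : ∀ u, G.Adj v u → deg G u ≤ deg G v) :
    lev G v = 0 ↔ ∀ u, G.Adj v u → deg G u = deg G v := by
  have hnonneg : ∀ u ∈ nbrs G v, (0 : ℚ) ≤ ((deg G v : ℚ) - deg G u) / (deg G v + deg G u) :=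
    fun u hu => div_nonneg (sub_nonneg.2 (by exact_mod_cast hle u ((mem_nbrs G).1 hu)))
      (by positivity)
  simp only [lev_eq_zero_iff, sum_eq_zero_iff_of_nonneg hnonneg, mem_nbrs,
    natCast_sub_div_natCast_add_eq_zero_iff, eq_comm (a := deg G v)]

theorem exists_adj_deg_ne_and_forall_adj_deg_le (h : ∃ u v, G.Adj u v ∧ deg G u ≠ deg G v) :
    ∃ v, (∃ u, G.Adj v u ∧ deg G u ≠ deg G v) ∧ ∀ u, G.Adj v u → deg G u ≤ deg G v := by
  classical
  set S : Finset V := univ.filter fun v => ∃ u, G.Adj v u ∧ deg G u ≠ deg G v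
  have hS : S.Nonempty := by
    obtain ⟨a, b, hab, hne⟩ := h
    exact ⟨a, mem_filter.2 ⟨mem_univ a, b, hab, hne.symm⟩⟩
  obtain ⟨v, hvS, hmax⟩ := S.exists_max_image (deg G) hS
  refine ⟨v, (mem_filter.1 hvS).2, fun u hvu => ?_⟩
  by_contra! hlt
  exact hlt.not_ge (hmax u (mem_filter.2 ⟨mem_univ u, v, hvu.symm, hlt.ne⟩))

end

theorem leverage_all_zero_iff_general {V : Type*} [Fintype V] (G : SimpleGraph V) :
    (∀ v : V, lev G v = 0) ↔ (∀ u v : V, G.Adj u v → deg G u = deg G v) := by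
  constructor
  · intro hlev
    by_contra! hunbalanced
    obtain ⟨v, ⟨u, hvu, hne⟩, hle⟩ := exists_adj_deg_ne_and_forall_adj_deg_le G hunbalanced
    exact hne ((lev_eq_zero_iff_of_forall_adj_deg_le G hle).1 (hlev v) u hvu)
  · intro hbalanced v
    exact (lev_eq_zero_iff_of_forall_adj_deg_le G fun u hvu => (hbalanced v u hvu).ge).2
      fun u hvu => (hbalanced v u hvu).symm

theorem leverage_all_zero_iff {V : Type*} [Fintype V] (G : SimpleGraph V)
    (hd : ∀ v : V, 1 ≤ deg G v) :
    (∀ v : V, lev G v = 0) ↔ (∀ u v : V, G.Adj u v → deg G u = deg G v) :=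
  leverage_all_zero_iff_general G
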